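/- arXiv:1903.01850 — 4 statements merged into one kernel-verified Lean document; each statement's English description precedes it below -/
import Mathlib

section
/- (Gauss–Lucas) Every root of the derivative p' of a nonconstant complex polynomial p lies in the convex hull of the set of roots of p. -/
open Polynomial

theorem stmt_1 (p : ℂ[X]) (hdeg : 1 ≤ p.degree) :
    ∀ ζ ∈ p.derivative.roots, ζ ∈ convexHull ℝ {z : ℂ | p.IsRoot z} := by
  classical
  intro ζ hζ
  obtain ⟨hd0, hroot⟩ := (mem_roots'.mp hζ)
  by_cases hpζ : p.IsRoot ζ
  · exact subset_convexHull ℝ _ hpζ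
  have hp0 : p ≠ 0 := fun h => by simp [h] at hdeg
  set s := p.roots with hs
  have hcard : Multiset.card s = p.natDegree :=
    splits_iff_card_roots.mp (IsAlgClosed.splits p)
  have hfac : C p.leadingCoeff * (s.map fun r => X - C r).prod = p :=
    C_leadingCoeff_mul_prod_multiset_X_sub_C hcard
  have hne : ∀ r ∈ s, ζ - r ≠ 0 := by
    intro r hr h
    have : ζ = r := by linear_combination h
    exact hpζ (this ▸ (mem_roots'.mp hr).2)
  have hProd : (s.map fun r => ζ - r).prod ≠ 0 := by
    rw [Ne, Multiset.prod_eq_zero_iff]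
    intro h
    obtain ⟨r, hr, hr2⟩ := Multiset.mem_map.mp h
    exact hne r hr hr2
  have hlc : p.leadingCoeff ≠ 0 := leadingCoeff_ne_zero.mpr hp0
  -- logarithmic derivative identity
  have hkey : (s.map fun r => (ζ - r)⁻¹).sum = 0 := by
    have hder : p.derivative = C p.leadingCoeff *
        (s.map fun r => (s.erase r |>.map fun a => X - C a).prod * derivative (X - C r)).sum := by
      conv_lhs => rw [← hfac]
      rw [derivative_mul, derivative_C, zero_mul, zero_add, derivative_prod]
    have heval : (0:ℂ) = p.leadingCoeff *
        (s.map fun r => ((s.erase r).map fun a => ζ - a).prod).sum := by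
      rw [← hroot, hder]
      simp only [eval_mul, eval_C]
      congr 1
      rw [show eval ζ = ⇑(evalRingHom ζ) from rfl, map_multiset_sum (evalRingHom ζ), Multiset.map_map]
      congr 1
      apply Multiset.map_congr rfl
      intro r hr
      simp [eval_multiset_prod, Multiset.map_map, Function.comp]
    have herase : ∀ r ∈ s, ((s.erase r).map fun a => ζ - a).prod
        = (ζ - r)⁻¹ * (s.map fun a => ζ - a).prod := by
      intro r hr
      have : (s.map fun a => ζ - a).prod = (ζ - r) * ((s.erase r).map fun a => ζ - a).prod := by
        conv_lhs => rw [← Multiset.cons_erase hr]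
        rw [Multiset.map_cons, Multiset.prod_cons]
      rw [this, ← mul_assoc, inv_mul_cancel₀ (hne r hr), one_mul]
    have h2 : (s.map fun r => (ζ - r)⁻¹).sum * (s.map fun a => ζ - a).prod = 0 := by
      have := heval
      rw [Multiset.map_congr rfl herase] at this
      have h3 : (s.map fun r => (ζ - r)⁻¹ * (s.map fun a => ζ - a).prod).sum
          = (s.map fun r => (ζ - r)⁻¹).sum * (s.map fun a => ζ - a).prod := by
        rw [← Multiset.sum_map_mul_right]
      rw [h3] at this
      have := mul_eq_zero.mp this.symm
      tauto
    exact (mul_eq_zero.mp h2).resolve_right hProd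
  -- conjugate to get real-weighted identity
  have hconj : (s.map fun r => (Complex.normSq (ζ - r))⁻¹ • (ζ - r)).sum = 0 := by
    have := congrArg (starRingEnd ℂ) hkey
    rw [map_multiset_sum, Multiset.map_map, map_zero] at this
    rw [← this]
    congr 1
    apply Multiset.map_congr rfl
    intro r hr
    show (Complex.normSq (ζ - r))⁻¹ • (ζ - r) = (starRingEnd ℂ) (ζ - r)⁻¹
    rw [map_inv₀, Complex.inv_def, Complex.normSq_conj, Complex.conj_conj, Complex.real_smul,
      Complex.ofReal_inv, mul_comm]
  set t := s.toFinset with ht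
  set w : ℂ → ℝ := fun r => (s.count r : ℝ) * (Complex.normSq (ζ - r))⁻¹ with hw
  have hsum0 : ∑ r ∈ t, w r • (ζ - r) = 0 := by
    rw [← hconj, Finset.sum_multiset_map_count]
    apply Finset.sum_congr rfl
    intro r hr
    simp [hw, mul_smul, Nat.cast_smul_eq_nsmul]
  have hwpos : ∀ r ∈ t, 0 < w r := by
    intro r hr
    have hrs : r ∈ s := Multiset.mem_toFinset.mp hr
    apply mul_pos
    · exact_mod_cast Multiset.count_pos.mpr hrs
    · exact inv_pos.mpr (Complex.normSq_pos.mpr (hne r hrs))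
  have htne : t.Nonempty := by
    have : s ≠ 0 := by
      intro h
      rw [h] at hcard
      simp at hcard
      have : 1 ≤ p.natDegree := natDegree_pos_iff_degree_pos.mpr (lt_of_lt_of_le (by norm_num) hdeg)
      omega
    obtain ⟨r, hr⟩ := Multiset.exists_mem_of_ne_zero this
    exact ⟨r, Multiset.mem_toFinset.mpr hr⟩
  have hW : 0 < ∑ r ∈ t, w r := Finset.sum_pos hwpos htne
  have hζeq : ζ = t.centerMass w id := by
    rw [Finset.centerMass]
    have : ∑ r ∈ t, w r • (id r : ℂ) = (∑ r ∈ t, w r) • ζ := by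
      have h1 : ∑ r ∈ t, w r • (ζ - r) = (∑ r ∈ t, w r) • ζ - ∑ r ∈ t, w r • (r:ℂ) := by
        simp only [smul_sub, Finset.sum_sub_distrib, Finset.sum_smul]
      rw [h1] at hsum0
      simp only [id]
      linear_combination (norm := module) -hsum0
    rw [this, inv_smul_smul₀ (ne_of_gt hW)]
  rw [hζeq]
  exact Finset.centerMass_mem_convexHull t (fun r hr => (hwpos r hr).le) hW
    (fun r hr => (mem_roots'.mp (Multiset.mem_toFinset.mp hr)).2)
end

section
/- If all roots of a nonconstant polynomial p lie in the closed disk {z : |z - a| ≤ r}, then all roots of p' lie in the same closed disk. -/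
open Polynomial

theorem Polynomial.rootSet_derivative_subset_of_convex {P : ℂ[X]} (hP : 0 < P.degree)
    {s : Set ℂ} (hs : Convex ℝ s) (hroots : P.rootSet ℂ ⊆ s) :
    P.derivative.rootSet ℂ ⊆ s :=
  (rootSet_derivative_subset_convexHull_rootSet hP).trans (convexHull_min hroots hs)

theorem stmt_2_general (p : ℂ[X]) (hdeg : 1 ≤ p.degree) (a : ℂ) (r : ℝ)
    (h : ∀ z : ℂ, p.IsRoot z → ‖z - a‖ ≤ r) :
    ∀ ζ : ℂ, p.derivative.IsRoot ζ → ‖ζ - a‖ ≤ r := by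
  intro ζ hζ
  have hpos : 0 < p.degree := lt_of_lt_of_le (by decide) hdeg
  have hroots : p.rootSet ℂ ⊆ Metric.closedBall a r := fun z hz => by
    rw [mem_rootSet, coe_aeval_eq_eval] at hz
    exact mem_closedBall_iff_norm.mpr (h z hz.2)
  have hζ' : ζ ∈ p.derivative.rootSet ℂ := by
    rw [mem_rootSet, coe_aeval_eq_eval]
    exact ⟨derivative_ne_zero.mpr (natDegree_pos_iff_degree_pos.mpr hpos).ne', hζ⟩
  exact mem_closedBall_iff_norm.mp <|
    rootSet_derivative_subset_of_convex hpos (convex_closedBall a r) hroots hζ'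

theorem stmt_2 (p : ℂ[X]) (hdeg : 1 ≤ p.degree) (a : ℂ) (r : ℝ) (hr : 0 ≤ r)
    (h : ∀ z : ℂ, p.IsRoot z → ‖z - a‖ ≤ r) :
    ∀ ζ : ℂ, p.derivative.IsRoot ζ → ‖ζ - a‖ ≤ r :=
  stmt_2_general p hdeg a r h
end

section
/- If |w - a| ≤ r and |w - z_1| > r with z_1 ≠ a, then Re((z_1 - w) * conj(z_1 - a)) > |z_1 - a|²/2 > 0; in particular the vector z_1 - w lies in the open half-plane determined by the direction z_1 - a. -/
open scoped InnerProductSpace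

theorem half_sq_norm_lt_real_inner_of_norm_sub_lt {E : Type*} [NormedAddCommGroup E]
    [InnerProductSpace ℝ E] {u v : E} (h : ‖u - v‖ < ‖v‖) : ‖u‖ ^ 2 / 2 < ⟪u, v⟫_ℝ := by
  have hsq : ‖u - v‖ ^ 2 < ‖v‖ ^ 2 := pow_lt_pow_left₀ h (norm_nonneg _) two_ne_zero
  rw [norm_sub_sq_real] at hsq
  linarith

theorem stmt_8_general (a z₁ w : ℂ) (r : ℝ) (hne : z₁ ≠ a)
    (hwa : ‖w - a‖ ≤ r) (hwz : r < ‖w - z₁‖) :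
    ((z₁ - w) * (starRingEnd ℂ) (z₁ - a)).re > (‖z₁ - a‖) ^ 2 / 2 ∧
    (‖z₁ - a‖) ^ 2 / 2 > 0 := by
  have hclose : ‖(z₁ - a) - (z₁ - w)‖ < ‖z₁ - w‖ := by
    rw [sub_sub_sub_cancel_left, norm_sub_rev z₁]
    exact hwa.trans_lt hwz
  have hpos : 0 < ‖z₁ - a‖ := norm_pos_iff.mpr (sub_ne_zero.mpr hne)
  refine ⟨?_, by positivity⟩
  rw [← Complex.inner]
  exact half_sq_norm_lt_real_inner_of_norm_sub_lt hclose

theorem stmt_8 (a z₁ w : ℂ) (r : ℝ) (hr : 0 < r) (hne : z₁ ≠ a)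
    (hwa : ‖w - a‖ ≤ r) (hwz : r < ‖w - z₁‖) :
    ((z₁ - w) * (starRingEnd ℂ) (z₁ - a)).re > (‖z₁ - a‖) ^ 2 / 2 ∧
    (‖z₁ - a‖) ^ 2 / 2 > 0 :=
  stmt_8_general a z₁ w r hne hwa hwz
end

section
/- If p has degree n ≥ 2, all roots in the closed unit disk, and z_1 is a root of p equal to the centroid of the roots of p, then p' has a root ζ with |ζ - z_1| ≤ 1. -/
/-!
By Gauss–Lucas the critical points of `p` lie in the unit disk, and comparing the two top
coefficients of `p` and `p'` shows that their centroid is the centroid `z₁` of the roots.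
Averaging, some critical point `ζ` has `⟪z₁, ζ - z₁⟫ ≥ 0`, and then
`‖ζ‖² = ‖ζ - z₁‖² + 2⟪ζ - z₁, z₁⟫ + ‖z₁‖² ≥ ‖ζ - z₁‖²`, so `‖ζ - z₁‖ ≤ ‖ζ‖ ≤ 1`.
-/

open Polynomial

open scoped RealInnerProductSpace

theorem Multiset.exists_inner_sub_nonneg_of_sum_eq_card_nsmul {E : Type*}
    [NormedAddCommGroup E] [InnerProductSpace ℝ E] {s : Multiset E} (hs : s ≠ 0) {c : E}
    (hc : s.sum = Multiset.card s • c) (v : E) : ∃ x ∈ s, 0 ≤ ⟪v, x - c⟫ := by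
  by_contra! hneg
  have hsum : (s.map fun x => ⟪v, x - c⟫).sum = 0 := calc
    _ = innerSL ℝ v (s.map (· - c)).sum := by rw [map_multiset_sum, Multiset.map_map]; rfl
    _ = 0 := by
      rw [Multiset.sum_map_sub, Multiset.map_id', Multiset.map_const', Multiset.sum_replicate,
        hc, sub_self, _root_.map_zero]
  have := Multiset.sum_lt_sum_of_nonempty (g := fun _ => (0 : ℝ)) hs hneg
  simp [hsum] at this

theorem norm_sub_le_norm_of_inner_sub_nonneg {E : Type*} [NormedAddCommGroup E]
    [InnerProductSpace ℝ E] {x c : E} (h : 0 ≤ ⟪c, x - c⟫) : ‖x - c‖ ≤ ‖x‖ := by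
  have hx : ‖x‖ ^ 2 = ‖x - c‖ ^ 2 + 2 * ⟪x - c, c⟫ + ‖c‖ ^ 2 := by
    rw [← norm_add_sq_real, sub_add_cancel]
  rw [real_inner_comm] at h
  nlinarith [norm_nonneg x, norm_nonneg (x - c), sq_nonneg ‖c‖]

theorem Multiset.exists_norm_sub_le_of_sum_eq_card_nsmul {E : Type*}
    [NormedAddCommGroup E] [InnerProductSpace ℝ E] {s : Multiset E} (hs : s ≠ 0) {c : E}
    (hc : s.sum = Multiset.card s • c) {r : ℝ} (hr : ∀ x ∈ s, ‖x‖ ≤ r) :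
    ∃ x ∈ s, ‖x - c‖ ≤ r := by
  obtain ⟨x, hxs, hx⟩ := s.exists_inner_sub_nonneg_of_sum_eq_card_nsmul hs hc c
  exact ⟨x, hxs, (norm_sub_le_norm_of_inner_sub_nonneg hx).trans (hr x hxs)⟩

namespace Polynomial

theorem nextCoeff_derivative {R : Type*} [Semiring R] [IsAddTorsionFree R] (p : R[X]) :
    p.derivative.nextCoeff = p.nextCoeff * (p.natDegree - 1 : ℕ) := by
  rcases Nat.lt_or_ge p.natDegree 2 with h | h
  · have : p.derivative.natDegree = 0 := by rw [natDegree_derivative]; omega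
    rw [nextCoeff, if_pos this, Nat.sub_eq_zero_of_le (by omega), Nat.cast_zero, mul_zero]
  · rw [nextCoeff_of_natDegree_pos (by rw [natDegree_derivative]; omega),
      nextCoeff_of_natDegree_pos (by omega), natDegree_derivative, coeff_derivative,
      ← Nat.cast_succ, Nat.succ_eq_add_one, Nat.sub_add_cancel (by omega)]

theorem natDegree_mul_sum_roots_derivative {K : Type*} [Field K] [IsAlgClosed K] [CharZero K]
    (p : K[X]) :
    (p.natDegree : K) * p.derivative.roots.sum = (p.natDegree - 1 : ℕ) * p.roots.sum := by
  rcases eq_or_ne p 0 with rfl | hp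
  · simp
  have hsplit := (IsAlgClosed.splits p).nextCoeff_eq_neg_sum_roots_mul_leadingCoeff
  have hsplit' := (IsAlgClosed.splits p.derivative).nextCoeff_eq_neg_sum_roots_mul_leadingCoeff
  rw [nextCoeff_derivative, leadingCoeff_derivative, hsplit] at hsplit'
  have hlc : p.leadingCoeff ≠ 0 := leadingCoeff_ne_zero.mpr hp
  apply mul_left_cancel₀ hlc
  linear_combination hsplit'

theorem mem_of_mem_roots_derivative {p : ℂ[X]} {S : Set ℂ} (hS : Convex ℝ S)
    (hroots : ∀ z ∈ p.roots, z ∈ S) {ζ : ℂ} (hζ : ζ ∈ p.derivative.roots) : ζ ∈ S := by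
  have hp' : p.derivative ≠ 0 := ne_zero_of_mem_roots hζ
  have hdeg : 0 < p.degree := natDegree_pos_iff_degree_pos.mp
    (Nat.pos_of_ne_zero (derivative_ne_zero.mp hp'))
  refine convexHull_min (fun z hz => hroots z ?_) hS
    (rootSet_derivative_subset_convexHull_rootSet hdeg ?_)
  · rw [mem_rootSet] at hz; exact (mem_roots hz.1).mpr (by simpa using hz.2)
  · exact (mem_rootSet_of_ne hp').mpr (by simpa using isRoot_of_mem_roots hζ)

end Polynomial

theorem stmt_10_general (n : ℕ) (hn : 2 ≤ n) (p : ℂ[X]) (hdeg : p.natDegree = n)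
    (hroots : ∀ z ∈ p.roots, ‖z‖ ≤ 1)
    (z₁ : ℂ) (hcent : z₁ = p.roots.sum / n) :
    ∃ ζ : ℂ, p.derivative.IsRoot ζ ∧ ‖ζ - z₁‖ ≤ 1 := by
  set t := p.derivative.roots
  have hcard : Multiset.card t = n - 1 := by
    rw [IsAlgClosed.card_roots_eq_natDegree, natDegree_derivative, hdeg]
  have ht : t ≠ 0 := Multiset.card_pos.mp (by omega)
  have hcentroid : t.sum = Multiset.card t • z₁ := by
    have hn0 : (n : ℂ) ≠ 0 := by exact_mod_cast (by omega : n ≠ 0)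
    have h := natDegree_mul_sum_roots_derivative p
    rw [hdeg] at h
    rw [hcard, nsmul_eq_mul, hcent]
    apply mul_left_cancel₀ hn0
    rw [h]
    field_simp
  have hdisk : ∀ ζ ∈ t, ‖ζ‖ ≤ 1 := fun ζ hζ => mem_closedBall_zero_iff.mp <|
    mem_of_mem_roots_derivative (convex_closedBall 0 1)
      (fun z hz => mem_closedBall_zero_iff.mpr (hroots z hz)) hζ
  obtain ⟨ζ, hζ, hdist⟩ := t.exists_norm_sub_le_of_sum_eq_card_nsmul ht hcentroid hdisk
  exact ⟨ζ, isRoot_of_mem_roots hζ, hdist⟩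

theorem stmt_10 (n : ℕ) (hn : 2 ≤ n) (p : ℂ[X]) (hdeg : p.natDegree = n)
    (hp : p ≠ 0)
    (hroots : ∀ z ∈ p.roots, ‖z‖ ≤ 1)
    (z₁ : ℂ) (hz₁ : p.IsRoot z₁) (hcent : z₁ = p.roots.sum / n) :
    ∃ ζ : ℂ, p.derivative.IsRoot ζ ∧ ‖ζ - z₁‖ ≤ 1 :=
  stmt_10_general n hn p hdeg hroots z₁ hcent
end
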